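/- arXiv:0902.1119 — 2 statements merged into one kernel-verified Lean document; each statement's English description precedes it below -/
import Mathlib

section
/- Let Λ be a ring, n a positive integer, and let H^n_Λ denote the class of left Λ-modules M of projective dimension n admitting a projective resolution by finitely generated projective modules and satisfying Ext^i_Λ(M,Λ) = 0 for all i ≠ n. If 0 → A → B → C → 0 is a short exact sequence of Λ-modules with A and C in H^n_Λ, then B is in H^n_Λ. -/
open CategoryTheory

noncomputable section

set_option synthInstance.maxHeartbeats 400000
set_option maxHeartbeats 1000000
attribute [local instance] HasDerivedCategory.standard
attribute [local instance] CategoryTheory.hasExt_of_hasDerivedCategory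

/-- `M` admits a projective resolution all of whose terms are finitely generated. -/
def HasFGProjRes (Λ : Type) [Ring Λ] (M : ModuleCat.{0} Λ) : Prop :=
  ∃ P : CategoryTheory.ProjectiveResolution M, ∀ i : ℕ, Module.Finite Λ (P.complex.X i)

/-- Membership in the subcategory `H^n_Λ` of `Mod Λ`: `M` has projective dimension exactly
`n` (expressed via vanishing of `Ext^i(M,-)` for `i > n` and non-vanishing of some
`Ext^n(M,N)`), admits a projective resolution by finitely generated modules, and
`Ext^i_Λ(M,Λ) = 0` for all `i ≠ n`. -/
structure MemH (Λ : Type) [Ring Λ] (n : ℕ) (M : ModuleCat.{0} Λ) : Prop where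
  pd_le : ∀ (N : ModuleCat.{0} Λ) (i : ℕ), n < i → Subsingleton (Abelian.Ext M N i)
  pd_ge : ∃ N : ModuleCat.{0} Λ, Nontrivial (Abelian.Ext M N n)
  fg_res : HasFGProjRes Λ M
  gorenstein : ∀ i : ℕ, i ≠ n → Subsingleton (Abelian.Ext M (ModuleCat.of Λ Λ) i)

/-- The ring `Λ` has (left) global dimension exactly `n`. -/
def GlobalDimEq (Λ : Type) [Ring Λ] (n : ℕ) : Prop :=
  (∀ (M N : ModuleCat.{0} Λ) (i : ℕ), n < i → Subsingleton (Abelian.Ext M N i)) ∧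
    ∃ M N : ModuleCat.{0} Λ, Nontrivial (Abelian.Ext M N n)

/-!
The vanishing conditions on `Ext^i(-, N)` pass from `A` and `C` to `B` through the exact
sequences `Ext^i(C, N) → Ext^i(B, N) → Ext^i(A, N)`, and a nonzero class in `Ext^n(A, N)`
lifts to `Ext^n(B, N)` since its obstruction lives in `Ext^{n+1}(C, N) = 0`.

Finitely generated projective resolutions `P` of `A` and `Q` of `C` give one of `B` by the
horseshoe lemma: its terms are `P_i ⊞ Q_i`, and its differential is `d_P` and `d_Q` twisted
by maps `θ_i : Q_{i+1} → P_i`, lifted one degree at a time using projectivity of `Q`. It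
resolves `B` because it sits in a degreewise split short exact sequence of complexes
`0 → P → P ⊞ Q → Q → 0` over `0 → A → B → C → 0`, so the long exact homology sequences
and the five lemma apply.
-/

universe w v u

namespace ChainComplex

open CategoryTheory Abelian HomologicalComplex HomologySequence ComposableArrows

variable {C : Type u} [Category.{v} C] [Abelian C]

lemma quasiIso_τ₂_of_shortExact {S₁ S₂ : ShortComplex (ChainComplex C ℕ)} (φ : S₁ ⟶ S₂)
    (hS₁ : S₁.ShortExact) (hS₂ : S₂.ShortExact) (h₁ : QuasiIso φ.τ₁) (h₃ : QuasiIso φ.τ₃) :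
    QuasiIso φ.τ₂ := by
  have rel (j : ℕ) : (ComplexShape.down ℕ).Rel (j + 1) j := rfl
  rw [quasiIso_iff]
  intro i
  rw [quasiIsoAt_iff_isIso_homologyMap]
  have : Mono (homologyMap φ.τ₂ i) :=
    mono_of_epi_of_mono_of_mono
      ((δ₀Functor ⋙ δ₀Functor).map (mapComposableArrows₅ φ hS₁ hS₂ (i + 1) i (rel i)))
      (composableArrows₅_exact hS₁ (i + 1) i (rel i)).δ₀.δ₀
      (composableArrows₅_exact hS₂ (i + 1) i (rel i)).δ₀.δ₀
      (inferInstanceAs (Epi (homologyMap φ.τ₃ (i + 1))))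
      (inferInstanceAs (Mono (homologyMap φ.τ₁ i)))
      (inferInstanceAs (Mono (homologyMap φ.τ₃ i)))
  have : Epi (homologyMap φ.τ₂ i) := by
    cases i with
    | zero =>
      have := hS₁.epi_g
      exact epi_of_epi_of_epi_of_epi (mapComposableArrows₂ φ 0) (composableArrows₂_exact hS₂ 0)
        (epi_homologyMap_of_epi_of_not_rel S₁.g 0 (by simp))
        (inferInstanceAs (Epi (homologyMap φ.τ₁ 0)))
        (inferInstanceAs (Epi (homologyMap φ.τ₃ 0)))
    | succ j =>
      exact epi_of_epi_of_epi_of_mono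
        ((δlastFunctor ⋙ δlastFunctor).map (mapComposableArrows₅ φ hS₁ hS₂ (j + 1) j (rel j)))
        (composableArrows₅_exact hS₁ (j + 1) j (rel j)).δlast.δlast
        (composableArrows₅_exact hS₂ (j + 1) j (rel j)).δlast.δlast
        (inferInstanceAs (Epi (homologyMap φ.τ₁ (j + 1))))
        (inferInstanceAs (Epi (homologyMap φ.τ₃ (j + 1))))
        (inferInstanceAs (Mono (homologyMap φ.τ₁ j)))
  exact isIso_of_mono_of_epi _

end ChainComplex

namespace CategoryTheory.ProjectiveResolution

variable {C : Type u} [Category.{v} C] [Abelian C] {Z : C} (P : ProjectiveResolution Z)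

/- `P.π.f 0` lands in `((single₀ C).obj Z).X 0`, which is `Z` only up to unfolding an `if`;
instance search and `simp` work better with this retyped copy. -/
def augmentation : P.complex.X 0 ⟶ Z := P.π.f 0

@[simp]
lemma π_f_zero : P.π.f 0 = P.augmentation := rfl

instance : Epi P.augmentation := inferInstanceAs (Epi (P.π.f 0))

@[simp]
lemma d_comp_augmentation : P.complex.d 1 0 ≫ P.augmentation = 0 :=
  P.complex_d_comp_π_f_zero

@[simp]
lemma d_comp_augmentation_assoc {W : C} (h : Z ⟶ W) :
    P.complex.d 1 0 ≫ P.augmentation ≫ h = 0 := by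
  rw [← Category.assoc, d_comp_augmentation, Limits.zero_comp]

lemma exact_augmentation : (ShortComplex.mk _ _ P.d_comp_augmentation).Exact :=
  P.exact₀

end CategoryTheory.ProjectiveResolution

namespace CategoryTheory.ShortComplex.ShortExact

open Limits

variable {C : Type u} [Category.{v} C] [Abelian C] {S : ShortComplex C} (hS : S.ShortExact)
  (P : ProjectiveResolution S.X₁) (Q : ProjectiveResolution S.X₃)

def horseshoeLift : Q.complex.X 0 ⟶ S.X₂ :=
  have := hS.epi_g
  Projective.factorThru Q.augmentation S.g

@[simp]
lemma horseshoeLift_g : hS.horseshoeLift Q ≫ S.g = Q.augmentation := by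
  have := hS.epi_g
  exact Projective.factorThru_comp _ _

def horseshoeConnectingZero : Q.complex.X 1 ⟶ P.complex.X 0 :=
  Projective.factorThru
    (hS.exact.liftFromProjective (-(Q.complex.d 1 0 ≫ hS.horseshoeLift Q)) (by simp))
    P.augmentation

@[simp]
lemma horseshoeConnectingZero_augmentation :
    hS.horseshoeConnectingZero P Q ≫ P.augmentation ≫ S.f =
      -(Q.complex.d 1 0 ≫ hS.horseshoeLift Q) := by
  rw [horseshoeConnectingZero, Projective.factorThru_comp_assoc,
    ShortComplex.Exact.liftFromProjective_comp]

def horseshoeConnectingAux : ∀ i : ℕ,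
    Σ' (θ : Q.complex.X (i + 1) ⟶ P.complex.X i)
      (θ' : Q.complex.X (i + 2) ⟶ P.complex.X (i + 1)),
      θ' ≫ P.complex.d (i + 1) i = -(Q.complex.d (i + 2) (i + 1) ≫ θ)
  | 0 => ⟨hS.horseshoeConnectingZero P Q,
      P.exact_augmentation.liftFromProjective
        (-(Q.complex.d 2 1 ≫ hS.horseshoeConnectingZero P Q)) (by
          have := hS.mono_f
          simp [← cancel_mono S.f]),
      P.exact_augmentation.liftFromProjective_comp _ _⟩
  | i + 1 =>
      let prev := horseshoeConnectingAux i
      ⟨prev.2.1, (P.exact_succ i).liftFromProjective (-(Q.complex.d (i + 3) (i + 2) ≫ prev.2.1))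
          (by simp [prev.2.2]),
        (P.exact_succ i).liftFromProjective_comp _ _⟩

def horseshoeConnecting (i : ℕ) : Q.complex.X (i + 1) ⟶ P.complex.X i :=
  (hS.horseshoeConnectingAux P Q i).1

@[simp]
lemma horseshoeConnecting_zero_augmentation :
    hS.horseshoeConnecting P Q 0 ≫ P.augmentation ≫ S.f =
      -(Q.complex.d 1 0 ≫ hS.horseshoeLift Q) :=
  hS.horseshoeConnectingZero_augmentation P Q

@[simp]
lemma horseshoeConnecting_succ_d (i : ℕ) :
    hS.horseshoeConnecting P Q (i + 1) ≫ P.complex.d (i + 1) i =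
      -(Q.complex.d (i + 2) (i + 1) ≫ hS.horseshoeConnecting P Q i) :=
  (hS.horseshoeConnectingAux P Q i).2.2

@[simp]
lemma horseshoeConnecting_succ_d_assoc (i : ℕ) {W : C} (h : P.complex.X i ⟶ W) :
    hS.horseshoeConnecting P Q (i + 1) ≫ P.complex.d (i + 1) i ≫ h =
      -(Q.complex.d (i + 2) (i + 1) ≫ hS.horseshoeConnecting P Q i ≫ h) := by
  rw [← Category.assoc, horseshoeConnecting_succ_d, Preadditive.neg_comp, Category.assoc]

def horseshoeD (i : ℕ) :
    P.complex.X (i + 1) ⊞ Q.complex.X (i + 1) ⟶ P.complex.X i ⊞ Q.complex.X i :=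
  biprod.desc (P.complex.d (i + 1) i ≫ biprod.inl)
    (hS.horseshoeConnecting P Q i ≫ biprod.inl + Q.complex.d (i + 1) i ≫ biprod.inr)

lemma horseshoeD_comp_horseshoeD (i : ℕ) :
    hS.horseshoeD P Q (i + 1) ≫ hS.horseshoeD P Q i = 0 := by
  ext : 1 <;> simp [horseshoeD, Preadditive.comp_add]

abbrev horseshoeComplex : ChainComplex C ℕ :=
  ChainComplex.of (fun i => P.complex.X i ⊞ Q.complex.X i) (hS.horseshoeD P Q)
    (hS.horseshoeD_comp_horseshoeD P Q)

lemma horseshoeComplex_d (i : ℕ) :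
    (hS.horseshoeComplex P Q).d (i + 1) i = hS.horseshoeD P Q i :=
  ChainComplex.of_d (fun i => P.complex.X i ⊞ Q.complex.X i) (hS.horseshoeD P Q) i

instance (i : ℕ) : Projective ((hS.horseshoeComplex P Q).X i) :=
  inferInstanceAs (Projective (P.complex.X i ⊞ Q.complex.X i))

def horseshoeAugmentation : (hS.horseshoeComplex P Q).X 0 ⟶ S.X₂ :=
  biprod.desc (P.augmentation ≫ S.f) (hS.horseshoeLift Q)

lemma d_comp_horseshoeAugmentation :
    (hS.horseshoeComplex P Q).d 1 0 ≫ hS.horseshoeAugmentation P Q = 0 := by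
  rw [horseshoeComplex_d]
  ext : 1 <;> simp [horseshoeD, horseshoeAugmentation]

def horseshoeπ : hS.horseshoeComplex P Q ⟶ (ChainComplex.single₀ C).obj S.X₂ :=
  (ChainComplex.toSingle₀Equiv _ _).symm
    ⟨hS.horseshoeAugmentation P Q, hS.d_comp_horseshoeAugmentation P Q⟩

@[simp]
lemma horseshoeπ_f_zero : (hS.horseshoeπ P Q).f 0 = hS.horseshoeAugmentation P Q :=
  ChainComplex.toSingle₀Equiv_symm_apply_f_zero _ _

@[simps]
def horseshoeInl : P.complex ⟶ hS.horseshoeComplex P Q where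
  f _ := biprod.inl
  comm' := by rintro _ i rfl; simp [horseshoeD]

@[simps]
def horseshoeSnd : hS.horseshoeComplex P Q ⟶ Q.complex where
  f _ := biprod.snd
  comm' := by rintro _ i rfl; ext : 1 <;> simp [horseshoeD]

def horseshoeShortComplex : ShortComplex (ChainComplex C ℕ) :=
  ShortComplex.mk (hS.horseshoeInl P Q) (hS.horseshoeSnd P Q) (by ext; simp)

lemma shortExact_horseshoeShortComplex : (hS.horseshoeShortComplex P Q).ShortExact := by
  rw [HomologicalComplex.shortExact_iff_degreewise_shortExact]
  intro i
  exact (ShortComplex.Splitting.ofHasBinaryBiproduct _ _).shortExact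

lemma horseshoeInl_comp_horseshoeπ :
    hS.horseshoeInl P Q ≫ hS.horseshoeπ P Q = P.π ≫ (ChainComplex.single₀ C).map S.f := by
  apply HomologicalComplex.to_single_hom_ext
  rw [HomologicalComplex.comp_f, HomologicalComplex.comp_f]
  simp [horseshoeAugmentation]

lemma horseshoeπ_comp_map_g :
    hS.horseshoeπ P Q ≫ (ChainComplex.single₀ C).map S.g = hS.horseshoeSnd P Q ≫ Q.π := by
  apply HomologicalComplex.to_single_hom_ext
  rw [HomologicalComplex.comp_f, HomologicalComplex.comp_f]
  ext : 1 <;> simp [horseshoeAugmentation]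

def horseshoeToSingle : hS.horseshoeShortComplex P Q ⟶ S.map (ChainComplex.single₀ C) where
  τ₁ := P.π
  τ₂ := hS.horseshoeπ P Q
  τ₃ := Q.π
  comm₁₂ := (hS.horseshoeInl_comp_horseshoeπ P Q).symm
  comm₂₃ := hS.horseshoeπ_comp_map_g P Q

instance : _root_.QuasiIso (hS.horseshoeπ P Q) :=
  ChainComplex.quasiIso_τ₂_of_shortExact (hS.horseshoeToSingle P Q)
    (hS.shortExact_horseshoeShortComplex P Q) (hS.map_of_exact (ChainComplex.single₀ C))
    P.quasiIso Q.quasiIso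

def horseshoe : ProjectiveResolution S.X₂ where
  complex := hS.horseshoeComplex P Q
  π := hS.horseshoeπ P Q

end CategoryTheory.ShortComplex.ShortExact

lemma HasFGProjRes.of_shortExact {Λ : Type} [Ring Λ] {S : ShortComplex (ModuleCat.{0} Λ)}
    (hS : S.ShortExact) (h₁ : HasFGProjRes Λ S.X₁) (h₃ : HasFGProjRes Λ S.X₃) :
    HasFGProjRes Λ S.X₂ := by
  obtain ⟨P, hP⟩ := h₁
  obtain ⟨Q, hQ⟩ := h₃
  refine ⟨hS.horseshoe P Q, fun i => ?_⟩
  have := hP i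
  have := hQ i
  exact Module.Finite.equiv
    (ModuleCat.biprodIsoProd (P.complex.X i) (Q.complex.X i)).toLinearEquiv.symm

namespace CategoryTheory.Abelian.Ext

variable {C : Type u} [Category.{v} C] [Abelian C] [HasExt.{w} C] {S : ShortComplex C}
  (hS : S.ShortExact) (Y : C) (n : ℕ)

include hS

lemma subsingleton_of_shortExact (h₁ : Subsingleton (Ext S.X₁ Y n))
    (h₃ : Subsingleton (Ext S.X₃ Y n)) : Subsingleton (Ext S.X₂ Y n) := by
  refine subsingleton_of_forall_eq 0 fun x => ?_
  obtain ⟨x₃, rfl⟩ := contravariant_sequence_exact₂ hS Y x (Subsingleton.elim _ _)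
  rw [Subsingleton.elim x₃ 0, comp_zero]

lemma nontrivial_of_shortExact (h₁ : Nontrivial (Ext S.X₁ Y n))
    (h₃ : Subsingleton (Ext S.X₃ Y (n + 1))) : Nontrivial (Ext S.X₂ Y n) := by
  obtain ⟨x₁, hx₁⟩ := exists_ne (0 : Ext S.X₁ Y n)
  obtain ⟨x₂, rfl⟩ :=
    contravariant_sequence_exact₁ hS Y x₁ (add_comm 1 n) (Subsingleton.elim _ _)
  exact nontrivial_of_ne x₂ 0 fun h => hx₁ (by rw [h, comp_zero])

end CategoryTheory.Abelian.Ext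

theorem closed_under_extensions_general (Λ : Type) [Ring Λ] (n : ℕ)
    (S : ShortComplex (ModuleCat.{0} Λ)) (hS : S.ShortExact)
    (hA : MemH Λ n S.X₁) (hC : MemH Λ n S.X₃) :
    MemH Λ n S.X₂ := by
  obtain ⟨N, hN⟩ := hA.pd_ge
  exact
    { pd_le := fun N i hi =>
        Abelian.Ext.subsingleton_of_shortExact hS N i (hA.pd_le N i hi) (hC.pd_le N i hi)
      pd_ge := ⟨N, Abelian.Ext.nontrivial_of_shortExact hS N n hN (hC.pd_le N (n + 1) n.lt_add_one)⟩
      fg_res := hA.fg_res.of_shortExact hS hC.fg_res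
      gorenstein := fun i hi =>
        Abelian.Ext.subsingleton_of_shortExact hS _ i (hA.gorenstein i hi) (hC.gorenstein i hi) }

/-- `H^n_Λ` is closed under extensions: if `0 → A → B → C → 0` is a short
exact sequence of left `Λ`-modules with `A` and `C` in `H^n_Λ`, then `B` is in `H^n_Λ`. -/
theorem closed_under_extensions (Λ : Type) [Ring Λ] (n : ℕ) (hn : 0 < n)
    (S : ShortComplex (ModuleCat.{0} Λ)) (hS : S.ShortExact)
    (hA : MemH Λ n S.X₁) (hC : MemH Λ n S.X₃) :
    MemH Λ n S.X₂ :=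
  closed_under_extensions_general Λ n S hS hA hC

end
end

section
/- Let Λ be a semiperfect left Noetherian ring, n ≥ 1, and let S^n denote the set of simple left Λ-modules belonging to H^n_Λ. Define t^n(M) as the sum of all submodules of M of finite length whose composition factors all lie in S^n. Then for every left Λ-module M, t^n(M/t^n(M)) = 0; that is, t^n is a radical. -/
/-!
`t^n(M)` is the directed union of the submodules of finite length with composition factors in
`S^n`, and this class is closed under submodules, quotients and extensions. If `x̄ ∈ M ⧸ t^n(M)`
lies in such a submodule, then `Λx` is an extension of its image `Λx̄` by `Λx ∩ t^n(M)`. Since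
`Λ` is Noetherian, the latter is finitely generated, hence contained in a single member of the
directed family. So `Λx` belongs to the class, i.e. `x ∈ t^n(M)`.
-/

open CategoryTheory

noncomputable section

set_option synthInstance.maxHeartbeats 400000
set_option maxHeartbeats 1000000
attribute [local instance] HasDerivedCategory.standard
attribute [local instance] CategoryTheory.hasExt_of_hasDerivedCategory

section Torsion

variable (Λ : Type) [Ring Λ] (n : ℕ)

/-- A module of finite length all of whose composition factors lie in `S^n`, the class of
simple modules belonging to `H^n_Λ`: it has finite length and every simple subquotient
lies in `H^n_Λ`. -/
def FactorsInH (N : Type) [AddCommGroup N] [Module Λ N] : Prop :=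
  IsFiniteLength Λ N ∧
    ∀ (L₁ L₂ : Submodule Λ N), L₁ ≤ L₂ →
      ∀ _ : IsSimpleModule Λ (L₂ ⧸ Submodule.comap L₂.subtype L₁),
        MemH Λ n (ModuleCat.of Λ (L₂ ⧸ Submodule.comap L₂.subtype L₁))

/-- The torsion submodule `t^n(M)`: the sum of all submodules of finite length with all
composition factors in `S^n`. -/
def tSub (M : Type) [AddCommGroup M] [Module Λ M] : Submodule Λ M :=
  sSup {L : Submodule Λ M | FactorsInH Λ n L}

end Torsion

section Semiperfect

variable (Λ : Type) [Ring Λ]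

/-- `M` has a projective cover: a projective module mapping onto `M` with superfluous
kernel. -/
def HasProjCover (M : ModuleCat.{0} Λ) : Prop :=
  ∃ (P : ModuleCat.{0} Λ) (π : P ⟶ M), CategoryTheory.Projective P ∧
    Function.Surjective π ∧
    ∀ N : Submodule Λ P, N ⊔ LinearMap.ker π.hom = ⊤ → N = ⊤

/-- `Λ` is semiperfect: every simple left `Λ`-module has a projective cover. -/
def IsSemiperfectRing : Prop :=
  ∀ M : ModuleCat.{0} Λ, IsSimpleModule Λ M → HasProjCover Λ M

end Semiperfect

open Abelian

section IsoInvariance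

variable {Λ : Type} [Ring Λ] {X X' : ModuleCat.{0} Λ}

def extEquivOfIso (e : X ≅ X') (Y : ModuleCat.{0} Λ) (i : ℕ) : Ext X' Y i ≃ Ext X Y i where
  toFun a := (Ext.mk₀ e.hom).comp a (zero_add i)
  invFun b := (Ext.mk₀ e.inv).comp b (zero_add i)
  left_inv a := by simp only [Ext.mk₀_comp_mk₀_assoc, Iso.inv_hom_id, Ext.mk₀_id_comp]
  right_inv b := by simp only [Ext.mk₀_comp_mk₀_assoc, Iso.hom_inv_id, Ext.mk₀_id_comp]

lemma HasFGProjRes.of_iso (e : X ≅ X') (h : HasFGProjRes Λ X) : HasFGProjRes Λ X' := by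
  obtain ⟨P, hP⟩ := h
  have := P.quasiIso
  exact ⟨{ complex := P.complex
           projective := P.projective
           hasHomology := P.hasHomology
           π := P.π ≫ (ChainComplex.single₀ (ModuleCat.{0} Λ)).map e.hom
           quasiIso := inferInstance }, hP⟩

lemma MemH.of_iso {n : ℕ} (e : X ≅ X') (h : MemH Λ n X) : MemH Λ n X' where
  pd_le N i hi := have := h.pd_le N i hi; (extEquivOfIso e N i).subsingleton
  pd_ge := by
    obtain ⟨N, _⟩ := h.pd_ge
    exact ⟨N, (extEquivOfIso e N n).nontrivial⟩
  fg_res := h.fg_res.of_iso e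
  gorenstein i hi := have := h.gorenstein i hi; (extEquivOfIso e _ i).subsingleton

end IsoInvariance

lemma LinearMap.exists_surjective_of_ker_le {R A B C : Type*} [Ring R] [AddCommGroup A]
    [Module R A] [AddCommGroup B] [Module R B] [AddCommGroup C] [Module R C]
    {f : A →ₗ[R] B} (hf : Function.Surjective f) {g : A →ₗ[R] C} (hg : Function.Surjective g)
    (hfg : ker f ≤ ker g) : ∃ k : B →ₗ[R] C, Function.Surjective k :=
  ⟨(ker f).liftQ g hfg ∘ₗ (f.quotKerEquivOfSurjective hf).symm.toLinearMap,
    fun y => by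
      obtain ⟨x, rfl⟩ := hg y
      exact ⟨f x, by simp⟩⟩

lemma isFiniteLength_of_submodule_of_quotient {R M : Type*} [Ring R] [AddCommGroup M]
    [Module R M] (p : Submodule R M) (hp : IsFiniteLength R p) (hq : IsFiniteLength R (M ⧸ p)) :
    IsFiniteLength R M := by
  rw [← Module.length_ne_top_iff] at hp hq ⊢
  rw [Module.length_eq_add_of_exact p.subtype p.mkQ p.injective_subtype p.mkQ_surjective
    (LinearMap.exact_subtype_mkQ p)]
  exact WithTop.add_ne_top.2 ⟨hp, hq⟩

section FactorsIn

variable {Λ : Type} [Ring Λ] (P : ModuleCat.{0} Λ → Prop)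

/-- Simple quotients of submodules are exactly the simple subquotients, so
`FiniteLengthFactorsIn (MemH Λ n)` is `FactorsInH Λ n`; unlike the latter, this form is closed
under submodules, quotients and extensions for an arbitrary `P`. -/
def FiniteLengthFactorsIn (N : Type) [AddCommGroup N] [Module Λ N] : Prop :=
  IsFiniteLength Λ N ∧ ∀ (Q : Type) [AddCommGroup Q] [Module Λ Q], IsSimpleModule Λ Q →
    ∀ (p : Submodule Λ N) (f : p →ₗ[Λ] Q), Function.Surjective f → P (ModuleCat.of Λ Q)

variable {P} {M N : Type} [AddCommGroup M] [Module Λ M] [AddCommGroup N] [Module Λ N]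

namespace FiniteLengthFactorsIn

lemma of_subsingleton [Subsingleton N] : FiniteLengthFactorsIn P N := by
  refine ⟨.of_subsingleton, fun Q _ _ hQ p f hf => ?_⟩
  have := hf.subsingleton
  exact (not_nontrivial Q hQ.nontrivial).elim

lemma of_injective (h : FiniteLengthFactorsIn P N) {f : M →ₗ[Λ] N}
    (hf : Function.Injective f) : FiniteLengthFactorsIn P M := by
  refine ⟨h.1.of_injective hf, fun Q _ _ hQ p g hg => ?_⟩
  let e := Submodule.equivMapOfInjective f hf p
  exact h.2 Q hQ (p.map f) (g ∘ₗ e.symm.toLinearMap) (hg.comp e.symm.surjective)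

lemma of_surjective (h : FiniteLengthFactorsIn P M) {f : M →ₗ[Λ] N}
    (hf : Function.Surjective f) : FiniteLengthFactorsIn P N :=
  ⟨h.1.of_surjective hf, fun Q _ _ hQ p g hg => h.2 Q hQ (p.comap f)
    (g ∘ₗ f.submoduleComap p) (hg.comp (f.submoduleComap_surjective_of_surjective p hf))⟩

lemma of_linearEquiv (h : FiniteLengthFactorsIn P M) (e : M ≃ₗ[Λ] N) :
    FiniteLengthFactorsIn P N :=
  h.of_surjective e.surjective

/-- A simple quotient `Q` of a submodule `q` is reached either from `q ⊓ p` or, when `q ⊓ p`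
dies in `Q`, from the image of `q` in `N ⧸ p`. -/
lemma of_extension (p : Submodule Λ N) (hp : FiniteLengthFactorsIn P p)
    (hq : FiniteLengthFactorsIn P (N ⧸ p)) : FiniteLengthFactorsIn P N := by
  refine ⟨isFiniteLength_of_submodule_of_quotient p hp.1 hq.1, fun Q _ _ hQ q g hg => ?_⟩
  rcases eq_bot_or_eq_top ((p.comap q.subtype).map g) with hbot | htop
  · let r := p.mkQ ∘ₗ q.subtype
    have hker : LinearMap.ker r.rangeRestrict ≤ LinearMap.ker g := by
      rw [LinearMap.ker_rangeRestrict, LinearMap.ker_comp, Submodule.ker_mkQ]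
      exact LinearMap.le_ker_iff_map.2 hbot
    obtain ⟨k, hk⟩ := LinearMap.exists_surjective_of_ker_le r.surjective_rangeRestrict hg hker
    exact hq.2 Q hQ (LinearMap.range r) k hk
  · refine hp.2 Q hQ (q.comap p.subtype) (g ∘ₗ p.subtype.restrict fun _ hx => hx) fun y => ?_
    obtain ⟨x, hxp, rfl⟩ : y ∈ (p.comap q.subtype).map g := htop ▸ Submodule.mem_top
    exact ⟨⟨⟨x, hxp⟩, x.2⟩, rfl⟩

lemma sup {A B : Submodule Λ M} (hA : FiniteLengthFactorsIn P A)
    (hB : FiniteLengthFactorsIn P B) : FiniteLengthFactorsIn P ↥(A ⊔ B) :=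
  of_extension (B.comap (A ⊔ B).subtype)
    (hB.of_linearEquiv (Submodule.comapSubtypeEquivOfLe le_sup_right).symm)
    ((hA.of_surjective (Submodule.mkQ_surjective _)).of_linearEquiv
      (LinearMap.quotientInfEquivSupQuotient A B))

end FiniteLengthFactorsIn

end FactorsIn

section FactorsTorsion

variable {Λ : Type} [Ring Λ] (P : ModuleCat.{0} Λ → Prop) (M : Type) [AddCommGroup M]
  [Module Λ M]

def factorsTorsion : Submodule Λ M :=
  sSup {L : Submodule Λ M | FiniteLengthFactorsIn P L}

variable {P M}

/-- The modules in the class form a directed family, and a finitely generated submodule is a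
compact element of the submodule lattice. -/
lemma finiteLengthFactorsIn_of_fg_of_le_factorsTorsion {N : Submodule Λ M} (hN : N.FG)
    (hle : N ≤ factorsTorsion P M) : FiniteLengthFactorsIn P N := by
  obtain ⟨L, hL, hNL⟩ := (CompleteLattice.isCompactElement_iff_le_of_directed_sSup_le
    (α := Submodule Λ M) N).1 ((Submodule.fg_iff_compact N).1 hN) _ ⟨⊥, .of_subsingleton⟩
    (fun A hA B hB => ⟨A ⊔ B, hA.sup hB, le_sup_left, le_sup_right⟩) hle
  exact hL.of_injective (Submodule.inclusion_injective hNL)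

lemma finiteLengthFactorsIn_of_map_mkQ_le [IsNoetherianRing Λ] {W : Submodule Λ M}
    (hW : W.FG) {L : Submodule Λ (M ⧸ factorsTorsion P M)} (hL : FiniteLengthFactorsIn P L)
    (hWL : W.map (factorsTorsion P M).mkQ ≤ L) : FiniteLengthFactorsIn P W := by
  have := isNoetherian_of_fg_of_noetherian W hW
  let g := (factorsTorsion P M).mkQ ∘ₗ W.subtype
  have hker : FiniteLengthFactorsIn P (LinearMap.ker g) := by
    have hfg : ((LinearMap.ker g).map W.subtype).FG :=
      (IsNoetherian.noetherian (LinearMap.ker g)).map _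
    have hle : (LinearMap.ker g).map W.subtype ≤ factorsTorsion P M := by
      rintro _ ⟨w, hw, rfl⟩
      simpa [g] using hw
    exact (finiteLengthFactorsIn_of_fg_of_le_factorsTorsion hfg hle).of_linearEquiv
      (Submodule.equivMapOfInjective _ W.injective_subtype _).symm
  have hrange : LinearMap.range g ≤ L := by
    rwa [LinearMap.range_comp, Submodule.range_subtype]
  exact .of_extension (LinearMap.ker g) hker
    ((hL.of_injective (Submodule.inclusion_injective hrange)).of_linearEquiv
      g.quotKerEquivRange.symm)

theorem factorsTorsion_quotient_factorsTorsion [IsNoetherianRing Λ] :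
    factorsTorsion P (M ⧸ factorsTorsion P M) = ⊥ := by
  refine sSup_eq_bot.2 fun L hL => eq_bot_iff.2 fun y hy => ?_
  obtain ⟨x, rfl⟩ := Submodule.mkQ_surjective _ y
  have hspan : Submodule.span Λ {x} ≤ factorsTorsion P M := by
    refine le_sSup (finiteLengthFactorsIn_of_map_mkQ_le (Submodule.fg_span_singleton x) hL ?_)
    rwa [Submodule.map_span, Set.image_singleton, Submodule.span_singleton_le_iff_mem]
  rw [Submodule.mem_bot, Submodule.mkQ_apply, Submodule.Quotient.mk_eq_zero]
  exact hspan (Submodule.mem_span_singleton_self x)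

end FactorsTorsion

lemma factorsInH_iff_finiteLengthFactorsIn {Λ : Type} [Ring Λ] {n : ℕ} {N : Type}
    [AddCommGroup N] [Module Λ N] :
    FactorsInH Λ n N ↔ FiniteLengthFactorsIn (MemH Λ n) N := by
  refine ⟨fun ⟨hlen, hsub⟩ => ⟨hlen, fun Q _ _ hQ p f hf => ?_⟩,
    fun ⟨hlen, hQ⟩ => ⟨hlen, fun L₁ L₂ _ hs => hQ _ hs L₂ _ (Submodule.mkQ_surjective _)⟩⟩
  let e : (p ⧸ ((LinearMap.ker f).map p.subtype).comap p.subtype) ≃ₗ[Λ] Q :=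
    (Submodule.quotEquivOfEq _ _ (Submodule.comap_map_eq_of_injective p.injective_subtype _))
      |>.trans (f.quotKerEquivOfSurjective hf)
  have := IsSimpleModule.congr e
  exact (hsub _ p (Submodule.map_subtype_le p _) this).of_iso e.toModuleIso

lemma tSub_eq_factorsTorsion (Λ : Type) [Ring Λ] (n : ℕ) :
    tSub Λ n = factorsTorsion (MemH Λ n) := by
  funext M _ _
  simp only [tSub, factorsTorsion, factorsInH_iff_finiteLengthFactorsIn]

theorem tn_is_radical_general (Λ : Type) [Ring Λ] [IsNoetherianRing Λ]
    (n : ℕ) (M : ModuleCat.{0} Λ) :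
    tSub Λ n (↥M ⧸ tSub Λ n ↥M) = ⊥ := by
  rw [tSub_eq_factorsTorsion]
  exact factorsTorsion_quotient_factorsTorsion

/-- over a semiperfect left Noetherian ring, `t^n` is a radical:
`t^n(M/t^n(M)) = 0` for every left `Λ`-module `M`. -/
theorem tn_is_radical (Λ : Type) [Ring Λ] [IsNoetherianRing Λ]
    (hsp : IsSemiperfectRing Λ) (n : ℕ) (hn : 0 < n) (M : ModuleCat.{0} Λ) :
    tSub Λ n (↥M ⧸ tSub Λ n ↥M) = ⊥ :=
  tn_is_radical_general Λ n M

end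
end
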